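/- Let m be an odd positive integer with m ≡ 1 (mod 3). Then: (1) for every prime p there exist x, y, z ∈ ℤ_p, not all divisible by p, with x² + xy + y² + 9z² = 4m²; but (2) there do not exist integers x, y, z with gcd(x, y, z) = 1 and x² + xy + y² + 9z² = 4m². -/

import Mathlib

/-!
Locally, reduce mod `p` and lift with Hensel's lemma in `y`: a solution mod `p` with
`2y + x ≢ 0` lifts, and `2y + x` then stays a unit, which makes the solution primitive. Such a
solution is `(1, 0, 1)` for `p = 2`, `(2m, 0, 0)` for `p ∤ 2m`, and `(2a, 1 - a, w)` with
`3a² + 9w² = -1` when `p ∣ m` (here `p ≠ 3` as `m ≡ 1 mod 3`).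

Globally, `x² + xy + y² = (2m - 3z)(2m + 3z)`, and `2m - 3z > 0` is `≡ 2 mod 3`. A prime
`q ≡ 2 mod 3` dividing `x² + xy + y²` divides `x` and `y`, since `ℤ/q` has no primitive cube root
of unity; descending by `q²` one finds such a prime dividing both `2m ∓ 3z`, hence `6z` and `z`.
-/

theorem ZMod.natCast_ne_zero_of_prime_ne {p q : ℕ} [Fact p.Prime] (hq : q.Prime) (hpq : p ≠ q) :
    (q : ZMod p) ≠ 0 := by
  rwa [Ne, ZMod.natCast_eq_zero_iff, Nat.prime_dvd_prime_iff_eq Fact.out hq]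

open Polynomial in
theorem FiniteField.exists_mul_sq_add_mul_sq_eq {F : Type*} [Field F] [Fintype F]
    (hF : Fintype.card F % 2 = 1) {a b : F} (ha : a ≠ 0) (hb : b ≠ 0) (c : F) :
    ∃ x y : F, a * x ^ 2 + b * y ^ 2 = c := by
  obtain ⟨x, y, h⟩ := FiniteField.exists_root_sum_quadratic
    (degree_quadratic (b := 0) (c := -c) ha) (degree_quadratic (b := 0) (c := 0) hb) hF
  refine ⟨x, y, ?_⟩
  simp only [eval_add, eval_mul, eval_pow, eval_C, eval_X] at h
  linear_combination h

namespace PadicInt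

variable {p : ℕ} [Fact p.Prime]

theorem toZMod_eq_zero_iff_dvd (t : ℤ_[p]) : toZMod t = 0 ↔ (p : ℤ_[p]) ∣ t := by
  rw [← RingHom.mem_ker, ker_toZMod, maximalIdeal_eq_span_p, Ideal.mem_span_singleton]

open Polynomial in
theorem exists_root_quadratic_of_toZMod {b c y₀ : ℤ_[p]} (h : toZMod (y₀ ^ 2 + b * y₀ + c) = 0)
    (hd : toZMod (2 * y₀ + b) ≠ 0) :
    ∃ y : ℤ_[p], y ^ 2 + b * y + c = 0 ∧ toZMod (2 * y + b) ≠ 0 := by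
  have hF (t : ℤ_[p]) : (X ^ 2 + C b * X + C c).aeval t = t ^ 2 + b * t + c := by simp
  have hF' (t : ℤ_[p]) : (X ^ 2 + C b * X + C c).derivative.aeval t = 2 * t + b := by
    simp [one_add_one_eq_two]
  have hlt (t : ℤ_[p]) : ‖t‖ < 1 ↔ toZMod t = 0 := by
    rw [norm_lt_one_iff_dvd, toZMod_eq_zero_iff_dvd]
  have hunit : ‖2 * y₀ + b‖ = 1 := (norm_le_one _).eq_of_not_lt ((hlt _).not.mpr hd)
  obtain ⟨y, hy, -, hy', -⟩ := hensels_lemma (F := X ^ 2 + C b * X + C c) (a := y₀)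
    (by rw [hF, hF', hunit, one_pow, hlt]; exact h)
  rw [hF', hF', hunit] at hy'
  exact ⟨y, hF y ▸ hy, (hlt _).not.mp hy'.not_lt⟩

end PadicInt

open PadicInt in
theorem exists_primitive_solution_of_zmod {p : ℕ} [Fact p.Prime] {M : ℤ_[p]} {a b c : ZMod p}
    (h : a ^ 2 + a * b + b ^ 2 + 9 * c ^ 2 = 4 * toZMod M ^ 2) (hu : 2 * b + a ≠ 0) :
    ∃ x y z : ℤ_[p], x ^ 2 + x * y + y ^ 2 + 9 * z ^ 2 = 4 * M ^ 2 ∧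
      ¬ ((p : ℤ_[p]) ∣ x ∧ (p : ℤ_[p]) ∣ y ∧ (p : ℤ_[p]) ∣ z) := by
  obtain ⟨x, rfl⟩ := ZMod.ringHom_surjective toZMod a
  obtain ⟨y₀, rfl⟩ := ZMod.ringHom_surjective toZMod b
  obtain ⟨z, rfl⟩ := ZMod.ringHom_surjective toZMod c
  obtain ⟨y, hy, hyu⟩ :=
    exists_root_quadratic_of_toZMod (b := x) (c := x ^ 2 + 9 * z ^ 2 - 4 * M ^ 2) (y₀ := y₀)
    (by simp only [map_add, map_sub, map_mul, map_pow, map_ofNat]; linear_combination h)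
    (by simpa only [map_add, map_mul, map_ofNat] using hu)
  refine ⟨x, y, z, by linear_combination hy, fun ⟨hx, hy, _⟩ => hyu ?_⟩
  rw [← toZMod_eq_zero_iff_dvd] at hx hy
  simp [hx, hy]

theorem exists_primitive_padic_solution {m : ℤ} (hm3 : m % 3 = 1) (p : ℕ) [hp : Fact p.Prime] :
    ∃ x y z : ℤ_[p], x ^ 2 + x * y + y ^ 2 + 9 * z ^ 2 = 4 * (m : ℤ_[p]) ^ 2 ∧
      ¬ ((p : ℤ_[p]) ∣ x ∧ (p : ℤ_[p]) ∣ y ∧ (p : ℤ_[p]) ∣ z) := by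
  suffices ∃ a b c : ZMod p, a ^ 2 + a * b + b ^ 2 + 9 * c ^ 2 = 4 * (m : ZMod p) ^ 2 ∧
      2 * b + a ≠ 0 by
    obtain ⟨a, b, c, h, hu⟩ := this
    exact exists_primitive_solution_of_zmod (by rwa [map_intCast]) hu
  rcases eq_or_ne p 2 with rfl | hp2
  · exact ⟨1, 0, 1, by reduce_mod_char, by norm_num⟩
  have h2 : (2 : ZMod p) ≠ 0 := by
    exact_mod_cast ZMod.natCast_ne_zero_of_prime_ne Nat.prime_two hp2
  by_cases hm : (m : ZMod p) = 0
  · have hp3 : p ≠ 3 := by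
      rintro rfl
      rw [ZMod.intCast_zmod_eq_zero_iff_dvd] at hm
      omega
    have h3 : (3 : ZMod p) ≠ 0 := by
      exact_mod_cast ZMod.natCast_ne_zero_of_prime_ne Nat.prime_three hp3
    have hcard : Fintype.card (ZMod p) % 2 = 1 := by
      rw [ZMod.card]; exact Nat.odd_iff.mp (hp.out.odd_of_ne_two hp2)
    have h9 : (9 : ZMod p) ≠ 0 := (by norm_num : (3 : ZMod p) ^ 2 = 9) ▸ pow_ne_zero 2 h3
    obtain ⟨a, w, h⟩ := FiniteField.exists_mul_sq_add_mul_sq_eq hcard h3 h9 (-1)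
    exact ⟨2 * a, 1 - a, w, by rw [hm]; linear_combination h, by ring_nf; exact h2⟩
  · exact ⟨2 * m, 0, 0, by ring, by simpa using ⟨h2, hm⟩⟩

theorem ZMod.eq_zero_of_sq_add_mul_add_sq_eq_zero {q : ℕ} [Fact q.Prime] (hq : q % 3 = 2)
    {a b : ZMod q} (h : a ^ 2 + a * b + b ^ 2 = 0) : a = 0 ∧ b = 0 := by
  suffices hb : b = 0 by
    subst hb
    exact ⟨by simpa using h, rfl⟩
  by_contra hb
  set t := a / b
  have ht : t ^ 2 + t + 1 = 0 := by
    simp only [t, div_pow]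
    field_simp
    linear_combination h
  have ht1 : t ≠ 1 := by
    intro h1
    rw [h1] at ht
    have h3 : ((3 : ℕ) : ZMod q) = 0 := by push_cast; linear_combination ht
    rw [ZMod.natCast_eq_zero_iff, Nat.dvd_prime Nat.prime_three] at h3
    omega
  have hord : orderOf t = 3 := orderOf_eq_prime (by linear_combination (t - 1) * ht) ht1
  have h3 : 3 ∣ q - 1 := hord ▸ ZMod.orderOf_dvd_card_sub_one (by rintro h0; simp [h0] at ht)
  omega

theorem Int.dvd_of_prime_dvd_sq_add_mul_add_sq {q : ℕ} (hq : q.Prime) (hq3 : q % 3 = 2)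
    {x y : ℤ} (h : (q : ℤ) ∣ x ^ 2 + x * y + y ^ 2) : (q : ℤ) ∣ x ∧ (q : ℤ) ∣ y := by
  have := Fact.mk hq
  simp only [← ZMod.intCast_zmod_eq_zero_iff_dvd] at h ⊢
  push_cast at h
  exact ZMod.eq_zero_of_sq_add_mul_add_sq_eq_zero hq3 h

theorem Nat.exists_prime_dvd_of_mod_three_eq_two {n : ℕ} (hn : n % 3 = 2) :
    ∃ q, q.Prime ∧ q % 3 = 2 ∧ q ∣ n := by
  induction n using Nat.recOnMul with
  | zero => omega
  | one => omega
  | prime p hp => exact ⟨p, hp, hn, dvd_rfl⟩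
  | mul a b iha ihb =>
    have : a % 3 = 2 ∨ b % 3 = 2 := by
      rw [Nat.mul_mod] at hn
      have := Nat.mod_lt a three_pos
      have := Nat.mod_lt b three_pos
      interval_cases a % 3 <;> interval_cases b % 3 <;> simp_all
    rcases this with ha | hb
    · obtain ⟨q, hq, hq3, hqa⟩ := iha ha
      exact ⟨q, hq, hq3, hqa.mul_right b⟩
    · obtain ⟨q, hq, hq3, hqb⟩ := ihb hb
      exact ⟨q, hq, hq3, hqb.mul_left a⟩

theorem exists_prime_dvd_of_mul_eq_sq_add_mul_add_sq {A : ℕ} (hA : A % 3 = 2) {B x y : ℤ}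
    (h : A * B = x ^ 2 + x * y + y ^ 2) :
    ∃ q : ℕ, q.Prime ∧ q % 3 = 2 ∧ (q : ℤ) ∣ A ∧ (q : ℤ) ∣ B ∧ (q : ℤ) ∣ x ∧ (q : ℤ) ∣ y := by
  induction A using Nat.strong_induction_on generalizing x y with
  | _ A ih =>
  obtain ⟨q, hq, hq3, hqA⟩ := Nat.exists_prime_dvd_of_mod_three_eq_two hA
  have hqA : (q : ℤ) ∣ A := Int.natCast_dvd_natCast.mpr hqA
  obtain ⟨⟨x, rfl⟩, ⟨y, rfl⟩⟩ :=
    Int.dvd_of_prime_dvd_sq_add_mul_add_sq hq hq3 (h ▸ hqA.mul_right B)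
  by_cases hqB : (q : ℤ) ∣ B
  · exact ⟨q, hq, hq3, hqA, hqB, dvd_mul_right _ _, dvd_mul_right _ _⟩
  have hq2A : (q : ℤ) ^ 2 ∣ A :=
    (Nat.prime_iff_prime_int.mp hq).pow_dvd_of_dvd_mul_right 2 hqB
      ⟨x ^ 2 + x * y + y ^ 2, by rw [h]; ring⟩
  obtain ⟨A', rfl⟩ : q ^ 2 ∣ A := by exact_mod_cast hq2A
  have hA' : A' % 3 = 2 := by
    have hq2 : q ^ 2 % 3 = 1 := by rw [Nat.pow_mod, hq3]
    rw [Nat.mul_mod, hq2] at hA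
    omega
  have h' : A' * B = x ^ 2 + x * y + y ^ 2 :=
    mul_left_cancel₀ (pow_ne_zero 2 (Nat.cast_ne_zero.mpr hq.ne_zero))
      (by push_cast at h; linear_combination h)
  have hlt : A' < q ^ 2 * A' :=
    lt_mul_left (by omega) (Nat.one_lt_pow two_ne_zero hq.one_lt)
  obtain ⟨r, hr, hr3, hrA, hrB, hrx, hry⟩ := ih A' hlt hA' h'
  exact ⟨r, hr, hr3, by push_cast; exact hrA.mul_left _, hrB, hrx.mul_left _, hry.mul_left _⟩

theorem not_exists_primitive_int_solution {m : ℤ} (hm_pos : 0 < m) (hm3 : m % 3 = 1) :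
    ¬ ∃ x y z : ℤ, Int.gcd (Int.gcd x y : ℤ) z = 1 ∧
      x ^ 2 + x * y + y ^ 2 + 9 * z ^ 2 = 4 * m ^ 2 := by
  rintro ⟨x, y, z, hgcd, h⟩
  have hz : 3 * z ≤ 2 * m := by nlinarith [sq_nonneg (2 * x + y), sq_nonneg y]
  obtain ⟨q, hq, hq3, hqA, hqB, hqx, hqy⟩ :=
    exists_prime_dvd_of_mul_eq_sq_add_mul_add_sq (A := (2 * m - 3 * z).toNat) (B := 2 * m + 3 * z)
      (x := x) (y := y) (by omega)
      (by rw [Int.toNat_of_nonneg (by linarith)]; linear_combination -h)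
  rw [Int.toNat_of_nonneg (by linarith)] at hqA
  have hqz : (q : ℤ) ∣ z := by
    have h6z : (q : ℤ) ∣ 6 * z := by
      simpa [show 2 * m + 3 * z - (2 * m - 3 * z) = 6 * z by ring] using dvd_sub hqB hqA
    rcases (Nat.prime_iff_prime_int.mp hq).dvd_or_dvd h6z with h6 | hz
    · have h6 : q ∣ 6 := by exact_mod_cast h6
      have := Nat.le_of_dvd (by norm_num) h6
      interval_cases q <;> omega
    · exact hz
  have hq1 : (q : ℤ) ∣ (1 : ℕ) := hgcd ▸ Int.dvd_coe_gcd (Int.dvd_coe_gcd hqx hqy) hqz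
  exact hq.not_dvd_one (Int.natCast_dvd_natCast.mp hq1)

theorem stmt11_general (m : ℤ) (hm_pos : 0 < m) (hm3 : m % 3 = 1) :
    (∀ (p : ℕ) [Fact p.Prime],
      ∃ x y z : ℤ_[p],
        x ^ 2 + x * y + y ^ 2 + 9 * z ^ 2 = 4 * (m : ℤ_[p]) ^ 2 ∧
          ¬ ((p : ℤ_[p]) ∣ x ∧ (p : ℤ_[p]) ∣ y ∧ (p : ℤ_[p]) ∣ z)) ∧
    ¬ ∃ x y z : ℤ, Int.gcd (Int.gcd x y : ℤ) z = 1 ∧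
        x ^ 2 + x * y + y ^ 2 + 9 * z ^ 2 = 4 * m ^ 2 :=
  ⟨fun p _ => exists_primitive_padic_solution hm3 p, not_exists_primitive_int_solution hm_pos hm3⟩

theorem stmt11 (m : ℤ) (hm_pos : 0 < m) (hm_odd : m % 2 = 1) (hm3 : m % 3 = 1) :
    (∀ (p : ℕ) [Fact p.Prime],
      ∃ x y z : ℤ_[p],
        x ^ 2 + x * y + y ^ 2 + 9 * z ^ 2 = 4 * (m : ℤ_[p]) ^ 2 ∧
          ¬ ((p : ℤ_[p]) ∣ x ∧ (p : ℤ_[p]) ∣ y ∧ (p : ℤ_[p]) ∣ z)) ∧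
    ¬ ∃ x y z : ℤ, Int.gcd (Int.gcd x y : ℤ) z = 1 ∧
        x ^ 2 + x * y + y ^ 2 + 9 * z ^ 2 = 4 * m ^ 2 :=
  stmt11_general m hm_pos hm3
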